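/- arXiv:0809.0529 — 4 statements merged into one kernel-verified Lean document; each statement's English description precedes it below -/
import Mathlib

section
/- Let (X,d_X) and (Y,d_Y) be metric spaces, f: X→X, g: Y→Y and h: X→Y satisfy h∘f = g∘h. Assume: (i) there is μ>1 with d_X(f(x),f(x')) ≤ μ·d_X(x,x') for all x,x' ∈ X; (ii) there are λ ∈ (1,μ] and R>0 with d_Y(g(y),g(y')) ≥ λ·d_Y(y,y') whenever d_Y(y,y') ≤ R; (iii) there are r>0 and K ∈ (0,R] such that d_X(a,b) ≤ r implies d_Y(h(a),h(b)) ≤ K. Then for all a,b ∈ X with d_X(a,b) ≤ r/μ one has d_Y(h(a),h(b)) ≤ K·(μ·d_X(a,b)/r)^{log λ/log μ}. In particular, h is Hölder continuous with exponent log λ/log μ at small distances. -/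
/-!
Iterate `f` until the orbit distance of `a, b` (initially `d`) would exceed the scale `r`: that takes about
`n ≈ log (r / d) / log μ` steps. Along the way the `h`-images stay `K`-close, hence within the
expanding range of `g`, so their distance grows by `λ` per step; this gives
`λ ^ n * dist (h a) (h b) ≤ K`, and `λ ^ n = (μ ^ n) ^ logb μ λ ≈ (r / d) ^ logb μ λ`.
-/

open Function

section Iterate

variable {X Y : Type*} [MetricSpace X] [MetricSpace Y]

theorem dist_iterate_le_pow_mul {f : X → X} {μ : ℝ} (hμ : 0 ≤ μ)
    (hf : ∀ x x' : X, dist (f x) (f x') ≤ μ * dist x x') (n : ℕ) (x x' : X) :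
    dist (f^[n] x) (f^[n] x') ≤ μ ^ n * dist x x' := by
  induction n with
  | zero => simp
  | succ n ih =>
    rw [iterate_succ_apply', iterate_succ_apply', pow_succ', mul_assoc]
    exact (hf _ _).trans (mul_le_mul_of_nonneg_left ih hμ)

theorem pow_mul_dist_le_dist_iterate {g : Y → Y} {lam R : ℝ} (hlam : 0 ≤ lam)
    (hg : ∀ y y' : Y, dist y y' ≤ R → lam * dist y y' ≤ dist (g y) (g y')) {y y' : Y} {n : ℕ}
    (hsmall : ∀ j < n, dist (g^[j] y) (g^[j] y') ≤ R) :
    lam ^ n * dist y y' ≤ dist (g^[n] y) (g^[n] y') := by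
  induction n with
  | zero => simp
  | succ n ih =>
    rw [iterate_succ_apply', iterate_succ_apply', pow_succ', mul_assoc]
    calc lam * (lam ^ n * dist y y')
        ≤ lam * dist (g^[n] y) (g^[n] y') :=
          mul_le_mul_of_nonneg_left (ih fun j hj => hsmall j (by omega)) hlam
      _ ≤ _ := hg _ _ (hsmall n n.lt_succ_self)

theorem pow_mul_dist_le_of_semiconj {f : X → X} {g : Y → Y} {h : X → Y}
    (hconj : Semiconj h f g) {μ : ℝ} (hμ : 1 ≤ μ)
    (hf : ∀ x x' : X, dist (f x) (f x') ≤ μ * dist x x') {lam R : ℝ} (hlam : 0 ≤ lam)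
    (hg : ∀ y y' : Y, dist y y' ≤ R → lam * dist y y' ≤ dist (g y) (g y')) {r K : ℝ}
    (hKR : K ≤ R) (hh : ∀ a b : X, dist a b ≤ r → dist (h a) (h b) ≤ K) {a b : X} {n : ℕ}
    (hn : μ ^ n * dist a b ≤ r) :
    lam ^ n * dist (h a) (h b) ≤ K := by
  have horbit : ∀ j ≤ n, dist (g^[j] (h a)) (g^[j] (h b)) ≤ K := fun j hj => by
    rw [← (hconj.iterate_right j).eq, ← (hconj.iterate_right j).eq]
    refine hh _ _ ((dist_iterate_le_pow_mul (by linarith) hf j a b).trans (le_trans ?_ hn))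
    exact mul_le_mul_of_nonneg_right (pow_le_pow_right₀ hμ hj) dist_nonneg
  exact (pow_mul_dist_le_dist_iterate hlam hg
    fun j hj => (horbit j hj.le).trans hKR).trans (horbit n le_rfl)

end Iterate

theorem inv_pow_le_rpow_logb {μ lam t : ℝ} (hμ : 1 < μ) (hlam : 1 ≤ lam) {n : ℕ}
    (ht : (μ ^ n)⁻¹ ≤ t) :
    (lam ^ n)⁻¹ ≤ t ^ Real.logb μ lam := by
  have hμ0 : 0 < μ := by linarith
  calc (lam ^ n)⁻¹ = ((μ ^ n)⁻¹) ^ Real.logb μ lam := by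
        rw [Real.inv_rpow (by positivity), ← Real.rpow_pow_comm hμ0.le,
          Real.rpow_logb hμ0 hμ.ne' (by linarith)]
    _ ≤ t ^ Real.logb μ lam := Real.rpow_le_rpow (by positivity) ht (Real.logb_nonneg hμ hlam)

theorem conjugacy_holder_of_lipschitz_of_expanding_general
    {X Y : Type*} [MetricSpace X] [MetricSpace Y]
    (f : X → X) (g : Y → Y) (h : X → Y)
    (hconj : ∀ x : X, h (f x) = g (h x))
    (μ : ℝ) (hμ : 1 < μ)
    (hf : ∀ x x' : X, dist (f x) (f x') ≤ μ * dist x x')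
    (lam R : ℝ) (hlam1 : 1 < lam)
    (hg : ∀ y y' : Y, dist y y' ≤ R → lam * dist y y' ≤ dist (g y) (g y'))
    (r K : ℝ) (hr : 0 < r) (hK0 : 0 < K) (hKR : K ≤ R)
    (hh : ∀ a b : X, dist a b ≤ r → dist (h a) (h b) ≤ K) :
    ∀ a b : X, dist a b ≤ r / μ →
      dist (h a) (h b) ≤ K * (μ * dist a b / r) ^ (Real.log lam / Real.log μ) := by
  intro a b hab
  obtain rfl | hne := eq_or_ne a b
  · simp only [dist_self, mul_zero, zero_div]
    positivity
  have hd : 0 < dist a b := dist_pos.mpr hne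
  obtain ⟨n, hn_le, hn_lt⟩ : ∃ n : ℕ, μ ^ n ≤ r / dist a b ∧ r / dist a b < μ ^ (n + 1) :=
    exists_nat_pow_near ((one_le_div hd).mpr (hab.trans (div_le_self hr.le hμ.le))) hμ
  have hexpand : lam ^ n * dist (h a) (h b) ≤ K :=
    pow_mul_dist_le_of_semiconj hconj hμ.le hf (by linarith) hg hKR hh
      ((le_div_iff₀ hd).mp hn_le)
  have hscale : (μ ^ n)⁻¹ ≤ μ * dist a b / r := by
    rw [div_lt_iff₀ hd, pow_succ] at hn_lt
    rw [inv_le_iff_one_le_mul₀ (by positivity), div_mul_eq_mul_div, one_le_div hr]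
    linarith [mul_right_comm (μ ^ n) μ (dist a b), mul_comm (μ * dist a b) (μ ^ n)]
  calc dist (h a) (h b) ≤ K * (lam ^ n)⁻¹ := by
        rw [← div_eq_mul_inv, le_div_iff₀ (by positivity), mul_comm]
        exact hexpand
    _ ≤ K * (μ * dist a b / r) ^ (Real.log lam / Real.log μ) := by
        rw [Real.log_div_log]
        exact mul_le_mul_of_nonneg_left (inv_pow_le_rpow_logb hμ hlam1.le hscale) hK0.le

/-- **Abstract Hölder continuity of a conjugacy.**
Let `h ∘ f = g ∘ h`, where `f` expands distances by at most `μ > 1`,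
`g` expands small distances (below `R`) by at least `λ ∈ (1, μ]`, and `h`
maps `r`-small distances into `K`-small distances with `K ≤ R`.  Then for
`dist a b ≤ r / μ` one has
`dist (h a) (h b) ≤ K * (μ * dist a b / r) ^ (log λ / log μ)`,
i.e. `h` is Hölder with exponent `log λ / log μ` at small distances. -/
theorem conjugacy_holder_of_lipschitz_of_expanding
    {X Y : Type*} [MetricSpace X] [MetricSpace Y]
    (f : X → X) (g : Y → Y) (h : X → Y)
    (hconj : ∀ x : X, h (f x) = g (h x))
    (μ : ℝ) (hμ : 1 < μ)
    (hf : ∀ x x' : X, dist (f x) (f x') ≤ μ * dist x x')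
    (lam R : ℝ) (hlam1 : 1 < lam) (hlamμ : lam ≤ μ) (hR : 0 < R)
    (hg : ∀ y y' : Y, dist y y' ≤ R → lam * dist y y' ≤ dist (g y) (g y'))
    (r K : ℝ) (hr : 0 < r) (hK0 : 0 < K) (hKR : K ≤ R)
    (hh : ∀ a b : X, dist a b ≤ r → dist (h a) (h b) ≤ K) :
    ∀ a b : X, dist a b ≤ r / μ →
      dist (h a) (h b) ≤ K * (μ * dist a b / r) ^ (Real.log lam / Real.log μ) :=
  conjugacy_holder_of_lipschitz_of_expanding_general f g h hconj μ hμ hf lam R hlam1 hg r K hr hK0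
    hKR hh
end

section
/- Let r > 0 and let γ: [0,∞) → ℝ be continuously differentiable with γ'(0) = 0, γ' Lipschitz on [0,∞), and γ(ρ) = 0 for all ρ ≥ r. Define θ: ℝ² → ℝ² by θ(p) = R_{γ(‖p‖)}·p, where R_α is the matrix [[cos α, sin α],[−sin α, cos α]] (and θ(0)=0). Then θ is differentiable at every point of ℝ² and its derivative Dθ: ℝ² → L(ℝ²,ℝ²) is Lipschitz continuous; that is, θ is a C^{1+Lip} map. -/
/-!
Write `φ p = γ ‖p‖` and `J = R_{π/2}`. Since `γ'(0) = 0`, `φ` is differentiable everywhere with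
gradient `v p = (γ' ‖p‖ / ‖p‖) • p`, and the chain rule gives
`Dθ(p) = R_{φ p} ∘ (1 + ⟨v p, ·⟩ • J p)`. The rotation factor has norm one and is Lipschitz in `p`
because `|γ'| ≤ K r`. Since `γ'` is `K`-Lipschitz with `γ'(0) = 0`, the field `v` is `3K`-Lipschitz,
and it vanishes outside the ball of radius `r`, which makes the second factor bounded and
Lipschitz. A product of bounded Lipschitz maps is Lipschitz.
-/

noncomputable section

abbrev E2 := EuclideanSpace ℝ (Fin 2)

/-- The (clockwise) rotation matrix `R_α = [[cos α, sin α], [−sin α, cos α]]`. -/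
def rotM (α : ℝ) : Matrix (Fin 2) (Fin 2) ℝ :=
  !![Real.cos α, Real.sin α; -Real.sin α, Real.cos α]

/-- The rotation `R_α` acting on `ℝ²`. -/
def rot (α : ℝ) : E2 →L[ℝ] E2 := Matrix.toEuclideanCLM (𝕜 := ℝ) (rotM α)

/-- The map `θ(p) = R_{γ(‖p‖)} p`, rotating each circle centered at the
origin rigidly by the angle `γ(radius)`. -/
def theta (γ : ℝ → ℝ) (p : E2) : E2 := rot (γ ‖p‖) p

open Real Set Filter Topology Asymptotics
open scoped NNReal

section
variable {g : ℝ → ℝ} {K : ℝ≥0}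

theorem LipschitzOnWith.abs_le_mul_of_map_zero (hg : LipschitzOnWith K g (Ici 0)) (h0 : g 0 = 0)
    {a : ℝ} (ha : 0 ≤ a) : |g a| ≤ K * a := by
  simpa [h0, Real.dist_eq, abs_of_nonneg ha] using hg.dist_le_mul a ha 0 self_mem_Ici

theorem LipschitzOnWith.abs_div_le_of_map_zero (hg : LipschitzOnWith K g (Ici 0)) (h0 : g 0 = 0)
    {a : ℝ} (ha : 0 ≤ a) : |g a / a| ≤ K := by
  rcases ha.eq_or_lt with rfl | ha
  · simp
  · rw [abs_div, abs_of_pos ha, div_le_iff₀ ha]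
    exact hg.abs_le_mul_of_map_zero h0 ha.le

theorem LipschitzOnWith.abs_div_sub_div_mul_le (hg : LipschitzOnWith K g (Ici 0)) (h0 : g 0 = 0)
    {a b : ℝ} (ha : 0 ≤ a) (hb : 0 ≤ b) : |g a / a - g b / b| * a ≤ 2 * K * |a - b| := by
  rcases ha.eq_or_lt with rfl | ha'
  · rw [mul_zero]; positivity
  have hsplit : (g a / a - g b / b) * a = (g a - g b) + g b / b * (b - a) := by
    rcases hb.eq_or_lt with rfl | hb'
    · simp [h0, ha'.ne']
    · field_simp
      ring
  have h1 : |g a - g b| ≤ K * |a - b| := by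
    simpa [Real.dist_eq] using hg.dist_le_mul a ha b hb
  have h2 : |g b / b * (b - a)| ≤ K * |a - b| := by
    rw [abs_mul, abs_sub_comm]
    exact mul_le_mul_of_nonneg_right (hg.abs_div_le_of_map_zero h0 hb) (abs_nonneg _)
  calc |g a / a - g b / b| * a = |(g a / a - g b / b) * a| := by rw [abs_mul, abs_of_pos ha']
    _ ≤ |g a - g b| + |g b / b * (b - a)| := hsplit ▸ abs_add_le _ _
    _ ≤ 2 * K * |a - b| := by linarith

theorem LipschitzOnWith.abs_le_mul_of_forall_ge_eq_zero (hg : LipschitzOnWith K g (Ici 0))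
    (h0 : g 0 = 0) {r : ℝ≥0} (hr : ∀ ρ : ℝ, r ≤ ρ → g ρ = 0) {ρ : ℝ} (hρ : 0 ≤ ρ) :
    |g ρ| ≤ K * r := by
  rcases le_or_gt ρ r with h | h
  · exact (hg.abs_le_mul_of_map_zero h0 hρ).trans (by gcongr)
  · rw [hr ρ h.le, abs_zero]; positivity

theorem LipschitzOnWith.comp_norm {E : Type*} [SeminormedAddCommGroup E]
    (hg : LipschitzOnWith K g (Ici 0)) : LipschitzWith K fun p : E => g ‖p‖ := by
  have h := hg.comp (lipschitzWith_one_norm.lipschitzOnWith (s := univ))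
    fun (p : E) _ => norm_nonneg p
  rwa [mul_one, lipschitzOnWith_univ] at h

end

theorem HasDerivWithinAt.eq_zero_of_forall_ge {f : ℝ → ℝ} {f' ρ : ℝ} {s : Set ℝ}
    (h : HasDerivWithinAt f f' s ρ) (hs : Ici ρ ⊆ s) (hf : ∀ x, ρ ≤ x → f x = 0) : f' = 0 :=
  (uniqueDiffWithinAt_Ici ρ).eq_deriv _ (h.mono hs)
    ((hasDerivWithinAt_const ρ _ 0).congr (fun x hx => hf x hx) (hf ρ le_rfl))

section
variable {E : Type*} [NormedAddCommGroup E] [NormedSpace ℝ E]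

theorem norm_div_norm_smul_le (c : ℝ) (x : E) : ‖(c / ‖x‖) • x‖ ≤ |c| := by
  rcases eq_or_ne x 0 with rfl | hx
  · simp
  · rw [norm_smul, norm_div, norm_norm, div_mul_cancel₀ _ (norm_ne_zero_iff.2 hx), Real.norm_eq_abs]

theorem LipschitzOnWith.lipschitzWith_div_norm_smul {g : ℝ → ℝ} {K : ℝ≥0}
    (hg : LipschitzOnWith K g (Ici 0)) (h0 : g 0 = 0) :
    LipschitzWith (3 * K) fun p : E => (g ‖p‖ / ‖p‖) • p := by
  refine LipschitzWith.of_dist_le_mul fun p q => ?_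
  rw [dist_eq_norm, dist_eq_norm]
  have hsplit : (g ‖p‖ / ‖p‖) • p - (g ‖q‖ / ‖q‖) • q
      = (g ‖p‖ / ‖p‖ - g ‖q‖ / ‖q‖) • p + (g ‖q‖ / ‖q‖) • (p - q) := by
    rw [sub_smul, smul_sub]; abel
  have hnorm := abs_norm_sub_norm_le p q
  have h1 : ‖(g ‖p‖ / ‖p‖ - g ‖q‖ / ‖q‖) • p‖ ≤ 2 * K * ‖p - q‖ := by
    rw [norm_smul, Real.norm_eq_abs]
    refine (hg.abs_div_sub_div_mul_le h0 (norm_nonneg p) (norm_nonneg q)).trans ?_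
    gcongr
  have h2 : ‖(g ‖q‖ / ‖q‖) • (p - q)‖ ≤ K * ‖p - q‖ := by
    rw [norm_smul, Real.norm_eq_abs]
    gcongr
    exact hg.abs_div_le_of_map_zero h0 (norm_nonneg q)
  rw [hsplit]
  push_cast
  linarith [norm_add_le ((g ‖p‖ / ‖p‖ - g ‖q‖ / ‖q‖) • p) ((g ‖q‖ / ‖q‖) • (p - q))]
end

section
variable {E F : Type*} [NormedAddCommGroup E] [InnerProductSpace ℝ E] [NormedAddCommGroup F]
  [NormedSpace ℝ F]

theorem hasFDerivAt_norm_of_ne_zero {x : E} (hx : x ≠ 0) :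
    HasFDerivAt (‖·‖) (‖x‖⁻¹ • innerSL ℝ x) x := by
  have h := (hasDerivAt_sqrt (by positivity)).comp_hasFDerivAt x
    (hasStrictFDerivAt_norm_sq x).hasFDerivAt
  simp only [Function.comp_def, sqrt_sq (norm_nonneg _)] at h
  refine h.congr_fderiv ?_
  ext v
  simp only [smul_apply, coe_innerSL_apply, nsmul_eq_mul, Nat.cast_ofNat, smul_eq_mul]
  field_simp

theorem hasFDerivAt_comp_norm {γ γ' : ℝ → ℝ}
    (hγ : ∀ ρ ∈ Ici (0 : ℝ), HasDerivWithinAt γ (γ' ρ) (Ici 0) ρ) (h0 : γ' 0 = 0) (p : E) :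
    HasFDerivAt (fun q : E => γ ‖q‖) (innerSL ℝ ((γ' ‖p‖ / ‖p‖) • p)) p := by
  rcases eq_or_ne p 0 with rfl | hp
  -- the claimed derivative at the origin is `innerSL 0`, because `0 / 0 = 0`
  · have hnorm : Tendsto (‖·‖) (𝓝 (0 : E)) (𝓝[≥] 0) :=
      tendsto_nhdsWithin_iff.2 ⟨by simpa using continuous_norm.tendsto (0 : E),
        Eventually.of_forall norm_nonneg⟩
    have h := (hγ 0 self_mem_Ici).isLittleO.comp_tendsto hnorm
    simp only [Function.comp_def, h0, smul_zero, sub_zero] at h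
    simpa [hasFDerivAt_iff_isLittleO_nhds_zero] using isLittleO_norm_right.1 h
  · have hρ : 0 < ‖p‖ := norm_pos_iff.2 hp
    have h := ((hγ _ hρ.le).hasDerivAt (Ici_mem_nhds hρ)).comp_hasFDerivAt p
      (hasFDerivAt_norm_of_ne_zero hp)
    refine h.congr_fderiv ?_
    ext v
    simp only [smul_apply, innerSL_apply_apply, real_inner_smul_left, smul_eq_mul]
    ring

theorem norm_innerSL_smulRight_sub_le (a b : E) (x y : F) :
    ‖(innerSL ℝ a).smulRight x - (innerSL ℝ b).smulRight y‖ ≤ ‖a - b‖ * ‖x‖ + ‖b‖ * ‖x - y‖ := by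
  have : (innerSL ℝ a).smulRight x - (innerSL ℝ b).smulRight y
      = (innerSL ℝ (a - b)).smulRight x + (innerSL ℝ b).smulRight (x - y) := by
    ext v
    simp [sub_smul, smul_sub]
  rw [this]
  refine (norm_add_le _ _).trans ?_
  simp only [ContinuousLinearMap.norm_smulRight_apply, innerSL_apply_norm, le_refl]

variable {v : E → E} {L : E →L[ℝ] F} {Kv M r : ℝ≥0}

theorem norm_innerSL_smulRight_le (hM : ∀ p, ‖v p‖ ≤ M)
    (hr : ∀ p, r ≤ ‖p‖ → v p = 0) (p : E) :
    ‖(innerSL ℝ (v p)).smulRight (L p)‖ ≤ M * (‖L‖ * r) := by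
  rcases le_or_gt (r : ℝ) ‖p‖ with hp | hp
  · simp only [hr p hp, map_zero, ContinuousLinearMap.zero_smulRight, norm_zero]
    positivity
  · rw [ContinuousLinearMap.norm_smulRight_apply, innerSL_apply_norm]
    gcongr
    · exact hM p
    · exact L.le_opNorm_of_le hp.le

theorem lipschitzWith_innerSL_smulRight (hv : LipschitzWith Kv v) (hM : ∀ p, ‖v p‖ ≤ M)
    (hr : ∀ p, r ≤ ‖p‖ → v p = 0) :
    LipschitzWith (‖L‖₊ * (Kv * r + M)) fun p => (innerSL ℝ (v p)).smulRight (L p) := by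
  refine LipschitzWith.of_dist_le_mul fun p q => ?_
  wlog hpq : ‖p‖ ≤ ‖q‖ generalizing p q
  · rw [dist_comm, dist_comm p]; exact this q p (le_of_not_ge hpq)
  rw [dist_eq_norm, dist_eq_norm]
  rcases le_or_gt (r : ℝ) ‖p‖ with hp | hp
  · simp only [hr p hp, hr q (hp.trans hpq), map_zero, ContinuousLinearMap.zero_smulRight,
      sub_self, norm_zero]
    positivity
  · refine (norm_innerSL_smulRight_sub_le _ _ _ _).trans ?_
    have h1 : ‖v p - v q‖ ≤ Kv * ‖p - q‖ := by
      simpa [dist_eq_norm] using hv.dist_le_mul p q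
    have h2 : ‖L p‖ ≤ ‖L‖ * r := L.le_opNorm_of_le hp.le
    have h3 : ‖L p - L q‖ ≤ ‖L‖ * ‖p - q‖ := by rw [← map_sub]; exact L.le_opNorm _
    calc ‖v p - v q‖ * ‖L p‖ + ‖v q‖ * ‖L p - L q‖
        ≤ (Kv * ‖p - q‖) * (‖L‖ * r) + M * (‖L‖ * ‖p - q‖) := by
          gcongr
          exact hM q
      _ = ‖L‖ * (Kv * r + M) * ‖p - q‖ := by ring
end

theorem LipschitzWith.mul_of_norm_le {α R : Type*} [PseudoMetricSpace α] [SeminormedRing R]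
    {f g : α → R} {Kf Kg Mf Mg : ℝ≥0} (hf : LipschitzWith Kf f) (hg : LipschitzWith Kg g)
    (hfM : ∀ x, ‖f x‖ ≤ Mf) (hgM : ∀ x, ‖g x‖ ≤ Mg) :
    LipschitzWith (Kf * Mg + Mf * Kg) fun x => f x * g x := by
  refine LipschitzWith.of_dist_le_mul fun x y => ?_
  rw [dist_eq_norm]
  have hsplit : f x * g x - f y * g y = (f x - f y) * g x + f y * (g x - g y) := by noncomm_ring
  have h1 : ‖f x - f y‖ ≤ Kf * dist x y := by simpa [dist_eq_norm] using hf.dist_le_mul x y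
  have h2 : ‖g x - g y‖ ≤ Kg * dist x y := by simpa [dist_eq_norm] using hg.dist_le_mul x y
  calc ‖f x * g x - f y * g y‖ ≤ ‖f x - f y‖ * ‖g x‖ + ‖f y‖ * ‖g x - g y‖ := by
        rw [hsplit]
        exact (norm_add_le _ _).trans (add_le_add (norm_mul_le _ _) (norm_mul_le _ _))
    _ ≤ (Kf * dist x y) * Mg + Mf * (Kg * dist x y) := by
        gcongr
        exacts [hgM x, hfM y]
    _ = _ := by push_cast; ring

theorem rotM_add (a b : ℝ) : rotM (a + b) = rotM a * rotM b := by
  ext i j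
  fin_cases i <;> fin_cases j <;> simp [rotM, cos_add, sin_add] <;> ring

theorem rotM_eq_cos_smul_add_sin_smul (α : ℝ) : rotM α = cos α • 1 + sin α • rotM (π / 2) := by
  ext i j
  fin_cases i <;> fin_cases j <;> simp [rotM]

theorem star_rotM (α : ℝ) : star (rotM α) = rotM (-α) := by
  ext i j
  fin_cases i <;> fin_cases j <;> simp [rotM, Matrix.star_apply]

theorem rot_add (a b : ℝ) : rot (a + b) = rot a * rot b := by
  rw [rot, rotM_add, map_mul]; rfl

theorem rot_zero : rot 0 = 1 := by
  rw [rot, show rotM 0 = 1 by simpa using rotM_eq_cos_smul_add_sin_smul 0, map_one]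

theorem rot_eq_cos_smul_add_sin_smul (α : ℝ) : rot α = cos α • 1 + sin α • rot (π / 2) := by
  rw [rot, rotM_eq_cos_smul_add_sin_smul, map_add, map_smul, map_smul, map_one]; rfl

theorem rot_mem_unitary (α : ℝ) : rot α ∈ unitary (E2 →L[ℝ] E2) := by
  have hstar : star (rot α) = rot (-α) := by
    rw [rot, ← map_star, star_rotM]; rfl
  refine ⟨?_, ?_⟩ <;> rw [hstar, ← rot_add, ← rot_zero] <;> congr 1 <;> ring

theorem norm_rot (α : ℝ) : ‖rot α‖ = 1 := CStarRing.norm_of_mem_unitary (rot_mem_unitary α)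

theorem hasDerivAt_rot (α : ℝ) : HasDerivAt rot (rot α * rot (π / 2)) α := by
  have h := ((hasDerivAt_cos α).smul_const (1 : E2 →L[ℝ] E2)).add
    ((hasDerivAt_sin α).smul_const (rot (π / 2)))
  rw [← rot_add, rot_eq_cos_smul_add_sin_smul (α + π / 2), cos_add_pi_div_two, sin_add_pi_div_two]
  exact h.congr_of_eventuallyEq (Eventually.of_forall rot_eq_cos_smul_add_sin_smul)

theorem lipschitzWith_rot : LipschitzWith 1 rot := by
  refine lipschitzWith_of_nnnorm_deriv_le (fun α => (hasDerivAt_rot α).differentiableAt)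
    fun α => ?_
  rw [(hasDerivAt_rot α).deriv, ← rot_add, ← NNReal.coe_le_coe, coe_nnnorm, norm_rot]; rfl

theorem hasFDerivAt_theta {γ γ' : ℝ → ℝ}
    (hγ : ∀ ρ ∈ Ici (0 : ℝ), HasDerivWithinAt γ (γ' ρ) (Ici 0) ρ) (h0 : γ' 0 = 0) (p : E2) :
    HasFDerivAt (theta γ)
      (rot (γ ‖p‖) * (1 + (innerSL ℝ ((γ' ‖p‖ / ‖p‖) • p)).smulRight (rot (π / 2) p))) p := by
  have hR := ((hasDerivAt_rot (γ ‖p‖)).hasFDerivAt.comp p (hasFDerivAt_comp_norm hγ h0 p))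
  refine (hR.clm_apply (hasFDerivAt_id p)).congr_fderiv ?_
  ext v : 1
  simp [mul_add, smul_smul]

/-- **The rigid circle-rotation map `θ` is `C^{1+Lip}`.**
If `γ : [0,∞) → ℝ` is continuously differentiable with `γ'(0) = 0`,
`γ'` Lipschitz, and `γ ≡ 0` on `[r, ∞)`, then `θ(p) = R_{γ(‖p‖)} p` is
differentiable everywhere and its derivative `Dθ` is Lipschitz. -/
theorem theta_differentiable_and_fderiv_lipschitz
    (r : ℝ) (hr : 0 < r) (γ γ' : ℝ → ℝ) (K : NNReal)
    (hderiv : ∀ ρ ∈ Set.Ici (0 : ℝ), HasDerivWithinAt γ (γ' ρ) (Set.Ici 0) ρ)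
    (hγ'0 : γ' 0 = 0)
    (hlip : LipschitzOnWith K γ' (Set.Ici 0))
    (hvanish : ∀ ρ : ℝ, r ≤ ρ → γ ρ = 0) :
    Differentiable ℝ (theta γ) ∧
      ∃ K' : NNReal, LipschitzWith K' (fun p => fderiv ℝ (theta γ) p) := by
  lift r to ℝ≥0 using hr.le
  have hγ'_vanish (ρ : ℝ) (hρ : r ≤ ρ) : γ' ρ = 0 :=
    (hderiv ρ (r.2.trans hρ)).eq_zero_of_forall_ge (Ici_subset_Ici.2 (r.2.trans hρ))
      fun x hx => hvanish x (hρ.trans hx)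
  have hγ'_bound {ρ : ℝ} (hρ : 0 ≤ ρ) := hlip.abs_le_mul_of_forall_ge_eq_zero hγ'0 hγ'_vanish hρ
  have hγ : LipschitzOnWith (K * r) γ (Ici 0) :=
    (convex_Ici 0).lipschitzOnWith_of_nnnorm_hasDerivWithin_le hderiv fun ρ hρ => by
      rw [← NNReal.coe_le_coe, coe_nnnorm]; exact hγ'_bound hρ
  have hv_bound (p : E2) : ‖(γ' ‖p‖ / ‖p‖) • p‖ ≤ (K * r : ℝ≥0) := by
    push_cast; exact (norm_div_norm_smul_le _ p).trans (hγ'_bound (norm_nonneg p))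
  have hv_vanish (p : E2) (hp : r ≤ ‖p‖) : (γ' ‖p‖ / ‖p‖) • p = 0 := by
    rw [hγ'_vanish _ hp, zero_div, zero_smul]
  have hA_bound (p : E2) :
      ‖1 + (innerSL ℝ ((γ' ‖p‖ / ‖p‖) • p)).smulRight (rot (π / 2) p)‖
        ≤ (1 + K * r * (‖rot (π / 2)‖₊ * r) : ℝ≥0) := by
    push_cast
    exact (norm_add_le _ _).trans
      (add_le_add norm_one.le (norm_innerSL_smulRight_le hv_bound hv_vanish p))
  have hA_lip := (LipschitzWith.const 1).add (lipschitzWith_innerSL_smulRight (L := rot (π / 2))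
    (hlip.lipschitzWith_div_norm_smul hγ'0) hv_bound hv_vanish)
  refine ⟨fun p => (hasFDerivAt_theta hderiv hγ'0 p).differentiableAt, ?_⟩
  rw [funext fun p => (hasFDerivAt_theta hderiv hγ'0 p).fderiv]
  exact ⟨_, (lipschitzWith_rot.comp hγ.comp_norm).mul_of_norm_le hA_lip (Mf := 1)
    (fun p => by simpa using (norm_rot (γ ‖p‖)).le) hA_bound⟩

end
end

section
/- Let λ > 1 and ε > 0. Let T: ℝ² → ℝ² be the linear map T(x,y) = (x/λ, λy). Suppose ψ: ℝ² → [0,∞) satisfies: (i) ψ(p) = λ^{-2}·ψ(T(p)) for every p = (x,y) with |y| ≤ 1; and (ii) ψ(q) ≤ ε for every q = (x,y) with 1 ≤ |y| ≤ λ. Then ψ(x,y) ≤ ε·y² for every (x,y) with 0 < |y| ≤ 1. -/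
/-! Iterating the equivariance `n` times moves a point `(x, y)` of the strip to `(x / λⁿ, λⁿ y)`
at the cost of a factor `λ⁻²ⁿ`; choosing `n` with `1 ≤ λⁿ |y| ≤ λ` lands in the region where
`ψ ≤ ε`, and since `(λⁿ y)² ≥ 1` there, `λ⁻²ⁿ ε ≤ λ⁻²ⁿ ε (λⁿ y)² = ε y²`. -/

theorem exists_pow_mul_mem_Icc {lam t : ℝ} (hlam : 1 < lam) (ht : 0 < t) (ht1 : t ≤ 1) :
    ∃ n : ℕ, lam ^ n * t ∈ Set.Icc 1 lam := by
  obtain ⟨n, hle, hlt⟩ := exists_nat_pow_near (one_le_one_div ht ht1) hlam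
  refine ⟨n + 1, ?_, ?_⟩
  · exact ((div_lt_iff₀ ht).mp hlt).le
  · rw [pow_succ', mul_assoc, mul_le_iff_le_one_right (by linarith)]
    exact (le_div_iff₀ ht).mp hle

theorem eq_pow_mul_of_equivariance {lam c : ℝ} (hlam : 1 ≤ lam) {ψ : ℝ × ℝ → ℝ}
    (hequiv : ∀ x y : ℝ, |y| ≤ 1 → ψ (x, y) = c * ψ (x / lam, lam * y)) (n : ℕ) {x y : ℝ}
    (hy : lam ^ n * |y| ≤ lam) : ψ (x, y) = c ^ n * ψ (x / lam ^ n, lam ^ n * y) := by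
  induction n generalizing x y with
  | zero => simp
  | succ n ih =>
    have hlam0 : 0 < lam := by linarith
    have hscaled : lam ^ n * |lam * y| ≤ lam := by
      rwa [abs_mul, abs_of_pos hlam0, ← mul_assoc, ← pow_succ]
    have hy1 : |y| ≤ 1 := by
      have : lam ^ n * |y| ≤ 1 := by
        rw [pow_succ', mul_assoc] at hy
        exact (mul_le_iff_le_one_right hlam0).mp hy
      exact le_trans (le_mul_of_one_le_left (abs_nonneg y) (one_le_pow₀ hlam)) this
    rw [hequiv x y hy1, ih hscaled, div_div, ← pow_succ', ← mul_assoc c, ← pow_succ',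
      ← mul_assoc (lam ^ n), ← pow_succ]

theorem quadratic_bound_of_equivariance_general
    (lam ε : ℝ) (hlam : 1 < lam) (hε : 0 < ε)
    (ψ : ℝ × ℝ → ℝ)
    (hequiv : ∀ x y : ℝ, |y| ≤ 1 → ψ (x, y) = lam⁻¹ ^ 2 * ψ (x / lam, lam * y))
    (hout : ∀ x y : ℝ, 1 ≤ |y| → |y| ≤ lam → ψ (x, y) ≤ ε) :
    ∀ x y : ℝ, 0 < |y| → |y| ≤ 1 → ψ (x, y) ≤ ε * y ^ 2 := by
  intro x y hy hy1
  obtain ⟨n, hn1, hnlam⟩ := exists_pow_mul_mem_Icc hlam hy hy1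
  have habs : |lam ^ n * y| = lam ^ n * |y| := by
    rw [abs_mul, abs_of_pos (pow_pos (by linarith) n)]
  have hsq : 1 ≤ (lam ^ n * y) ^ 2 := by
    rw [← sq_abs, habs]
    exact one_le_pow₀ hn1
  calc ψ (x, y) = (lam⁻¹ ^ 2) ^ n * ψ (x / lam ^ n, lam ^ n * y) :=
        eq_pow_mul_of_equivariance hlam.le hequiv n hnlam
    _ ≤ (lam⁻¹ ^ 2) ^ n * (ε * (lam ^ n * y) ^ 2) := by
        gcongr
        exact (hout _ _ (habs ▸ hn1) (habs ▸ hnlam)).trans (le_mul_of_one_le_right hε.le hsq)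
    _ = ε * y ^ 2 := by
        rw [← pow_mul, mul_comm 2, pow_mul, inv_pow]
        field_simp

/-- **Quadratic bound from `λ²`-equivariance (abstract form of the
Proposition of Section 3).**  Suppose `ψ : ℝ² → [0,∞)` satisfies
`ψ(p) = λ⁻² ψ(T p)` on the strip `|y| ≤ 1`, where `T(x,y) = (x/λ, λ y)`,
and `ψ ≤ ε` on the region `1 ≤ |y| ≤ λ`.  Then `ψ(x,y) ≤ ε y²` for
`0 < |y| ≤ 1`. -/
theorem quadratic_bound_of_equivariance
    (lam ε : ℝ) (hlam : 1 < lam) (hε : 0 < ε)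
    (ψ : ℝ × ℝ → ℝ) (hψ0 : ∀ p : ℝ × ℝ, 0 ≤ ψ p)
    (hequiv : ∀ x y : ℝ, |y| ≤ 1 → ψ (x, y) = lam⁻¹ ^ 2 * ψ (x / lam, lam * y))
    (hout : ∀ x y : ℝ, 1 ≤ |y| → |y| ≤ lam → ψ (x, y) ≤ ε) :
    ∀ x y : ℝ, 0 < |y| → |y| ≤ 1 → ψ (x, y) ≤ ε * y ^ 2 :=
  quadratic_bound_of_equivariance_general lam ε hlam hε ψ hequiv hout
end

section
/- Let λ > 1, let L be the 2×2 matrix [[λ^{-1}, 0],[0, λ]], let J = [[0,−1],[1,0]] be the quarter-turn rotation, and let v = (0,1). Define the two-sided sequence of vectors (w_n)_{n∈ℤ} by w_0 = v, w_{n+1} = A_n w_n for n ≥ 0 and w_{n} = A_n^{-1} w_{n+1} for n < 0, where A_0 = J·L and A_n = L for all n ≠ 0. Then ‖w_n‖ = λ^{2−n} for n ≥ 1 and ‖w_{−n}‖ = λ^{−n} for n ≥ 0; in particular ‖w_n‖ → 0 as n → +∞ and as n → −∞. -/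
/-!
Away from time `0` the cocycle is the diagonal matrix `L`, which contracts the horizontal axis by
`λ⁻¹` and expands the vertical one by `λ`. Backwards from `w 0 = v`, the inverse `L⁻¹` contracts the
vertical vector by `λ⁻¹` at each step. Forwards, the quarter turn in `A 0 = J·L` sends `v` to the
horizontal vector `(-λ, 0)`, i.e. into the stable direction, which `L` then contracts by `λ⁻¹` at
each step.
-/

open Matrix Function

section IntSequence

variable {E : Type*} {T : E → E} {w : ℤ → E} {m : ℤ}

theorem Int.seq_add_eq_iterate (h : ∀ n, m ≤ n → w (n + 1) = T (w n)) (k : ℕ) :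
    w (m + k) = T^[k] (w m) := by
  induction k with
  | zero => simp
  | succ k ih =>
    rw [iterate_succ_apply', ← ih, ← h _ (by omega)]
    push_cast
    ring_nf

theorem Int.seq_sub_eq_iterate {S : E → E} (hST : LeftInverse S T)
    (h : ∀ n, n < m → w (n + 1) = T (w n)) (k : ℕ) :
    w (m - k) = S^[k] (w m) := by
  induction k with
  | zero => simp
  | succ k ih =>
    have hstep : w (m - k) = T (w (m - k - 1)) := by simpa using h (m - k - 1) (by omega)
    rw [iterate_succ_apply', ← ih, hstep, hST]
    push_cast
    ring_nf

end IntSequence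

section FinTwo

variable {𝕜 : Type*} [RCLike 𝕜]

theorem Matrix.toEuclideanCLM_fin_two_apply (a b c d x y : 𝕜) :
    toEuclideanCLM (𝕜 := 𝕜) !![a, b; c, d] !₂[x, y] = !₂[a * x + b * y, c * x + d * y] := by
  rw [toEuclideanCLM_toLp, mulVec_fin_two]
  rfl

theorem Matrix.iterate_toEuclideanCLM_diag_apply (a d x y : 𝕜) (k : ℕ) :
    (toEuclideanCLM (𝕜 := 𝕜) !![a, 0; 0, d])^[k] !₂[x, y] = !₂[a ^ k * x, d ^ k * y] := by
  induction k with
  | zero => simp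
  | succ k ih =>
    rw [iterate_succ_apply', ih, toEuclideanCLM_fin_two_apply]
    simp only [pow_succ]
    ring_nf

theorem Matrix.leftInverse_toEuclideanCLM_diag {a d : 𝕜} (ha : a ≠ 0) (hd : d ≠ 0) :
    LeftInverse (toEuclideanCLM (𝕜 := 𝕜) !![a⁻¹, 0; 0, d⁻¹])
      (toEuclideanCLM (𝕜 := 𝕜) !![a, 0; 0, d]) := by
  intro x
  rw [← mul_apply_eq_comp, ← map_mul]
  simp [ha, hd, ← one_fin_two]

theorem EuclideanSpace.norm_fin_two_left (x : 𝕜) : ‖!₂[x, 0]‖ = ‖x‖ := by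
  rw [show !₂[x, 0] = EuclideanSpace.single 0 x by ext i; fin_cases i <;> simp, PiLp.norm_single]

theorem EuclideanSpace.norm_fin_two_right (y : 𝕜) : ‖!₂[0, y]‖ = ‖y‖ := by
  rw [show !₂[0, y] = EuclideanSpace.single 1 y by ext i; fin_cases i <;> simp, PiLp.norm_single]

end FinTwo

/-- **The derivative cocycle of the perturbed map kills the vertical vector
in both time directions.**  Let `L = [[λ⁻¹,0],[0,λ]]` (the hyperbolic map in
stable/unstable coordinates), `J = [[0,−1],[1,0]]` the quarter turn, and let
`(w n)_{n ∈ ℤ}` be the two-sided cocycle orbit of the vertical unit vector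
`v = (0,1)` under `A 0 = J·L` and `A n = L` for `n ≠ 0`.  Then
`‖w n‖ = λ^{2−n}` for `n ≥ 1` and `‖w (−n)‖ = λ^{−n}` for `n ≥ 0`; in
particular `‖w n‖ → 0` as `n → ±∞`. -/
theorem derivative_cocycle_vertical_vector_decays
    (lam : ℝ) (hlam : 1 < lam)
    (L J : Matrix (Fin 2) (Fin 2) ℝ)
    (hLdef : L = !![lam⁻¹, 0; 0, lam])
    (hJdef : J = !![0, -1; 1, 0])
    (A : ℤ → Matrix (Fin 2) (Fin 2) ℝ)
    (hA0 : A 0 = J * L) (hAn : ∀ n : ℤ, n ≠ 0 → A n = L)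
    (w : ℤ → EuclideanSpace ℝ (Fin 2))
    (hw0 : w 0 = (WithLp.equiv 2 (Fin 2 → ℝ)).symm ![0, 1])
    (hwrec : ∀ n : ℤ, w (n + 1) = Matrix.toEuclideanCLM (𝕜 := ℝ) (A n) (w n)) :
    (∀ n : ℕ, 1 ≤ n → ‖w (n : ℤ)‖ = lam ^ ((2 : ℤ) - (n : ℤ))) ∧
      (∀ n : ℕ, ‖w (-(n : ℤ))‖ = lam ^ (-(n : ℤ))) := by
  subst hLdef hJdef
  have hlam0 : 0 < lam := by linarith
  rw [WithLp.equiv_symm_apply] at hw0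
  have hstep : ∀ n : ℤ, n ≠ 0 →
      w (n + 1) = toEuclideanCLM (𝕜 := ℝ) !![lam⁻¹, 0; 0, lam] (w n) := fun n hn ↦ by
    rw [hwrec, hAn n hn]
  have hw1 : w 1 = !₂[-lam, 0] := by
    rw [← zero_add 1, hwrec, hA0, map_mul, mul_apply_eq_comp, hw0,
      toEuclideanCLM_fin_two_apply, toEuclideanCLM_fin_two_apply]
    simp
  constructor
  · intro n hn
    obtain ⟨k, rfl⟩ := Nat.exists_eq_add_of_le hn
    have hforward := Int.seq_add_eq_iterate (m := 1) (fun n hn ↦ hstep n (by omega)) k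
    rw [Nat.cast_add, Nat.cast_one, hforward, hw1, iterate_toEuclideanCLM_diag_apply, mul_zero,
      EuclideanSpace.norm_fin_two_left, norm_mul, norm_neg, norm_pow, norm_inv,
      Real.norm_of_nonneg hlam0.le, inv_pow, ← zpow_natCast, ← _root_.zpow_neg,
      ← zpow_add_one₀ hlam0.ne']
    congr 1
    ring
  · intro n
    have hbackward := Int.seq_sub_eq_iterate (m := 0)
      (leftInverse_toEuclideanCLM_diag (inv_ne_zero hlam0.ne') hlam0.ne')
      (fun n hn ↦ hstep n (by omega)) n
    rw [zero_sub] at hbackward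
    rw [hbackward, hw0, iterate_toEuclideanCLM_diag_apply, mul_zero, mul_one,
      EuclideanSpace.norm_fin_two_right, norm_pow, norm_inv, Real.norm_of_nonneg hlam0.le,
      _root_.zpow_neg, zpow_natCast, inv_pow]
end
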